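/- For every real s ≥ 0 and all real α > 0, β > 0, if the series ∑_{n=0}^∞ f(s;n,α,β)^2 / f(s;n+1,α,β) converges, then the Fisher information of the marginal model, defined as the expectation of the squared score, satisfies I(s) := ∑_{k=0}^∞ p(k|s) · (−1 + f^{(1)}(s;k,α,β)/f(s;k,α,β))^2 = (β/(1+β))^α · e^{−s} · ∑_{n=0}^∞ f(s;n,α,β)^2 / f(s;n+1,α,β) − 1, where f^{(1)}(s;0,α,β) = 0 and f^{(1)}(s;k,α,β) = f(s;k−1,α,β) for k ≥ 1. -/

import Mathlib

/-- The polynomial `f(s;k,α,β)`. -/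
noncomputable def f (s : ℝ) (k : ℕ) (α β : ℝ) : ℝ :=
  ∑ n ∈ Finset.range (k + 1),
    (Real.Gamma (α + n) / Real.Gamma α) * s ^ (k - n) /
      ((n.factorial : ℝ) * ((k - n).factorial : ℝ) * (1 + β) ^ n)

/-- The marginal model `p(k|s) = (β/(1+β))^α · e^{−s} · f(s;k,α,β)`. -/
noncomputable def p (s : ℝ) (k : ℕ) (α β : ℝ) : ℝ :=
  (β / (1 + β)) ^ α * Real.exp (-s) * f s k α β

/-!
The weights `p(k|s)` form a probability distribution: `f(s;·,α,β)` is the Cauchy product of the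
negative binomial series `∑ Γ(α+n)/(Γ(α) n!) xⁿ = (1-x)^(-α)` at `x = 1/(1+β)` with the
exponential series of `s`, so `∑ₖ f(s;k,α,β) = eˢ ((1+β)/β)^α`. With `c` the normalising
constant and `gₖ = f⁽¹⁾(s;k,α,β)`, each term of the Fisher information expands as
`c gₖ²/fₖ - 2 c gₖ + c fₖ`, and the shift `k ↦ k + 1` turns `∑ gₖ²/fₖ` into the given series and
`∑ c gₖ` into `∑ c fₖ = 1`.
-/

open Finset Nat

theorem Real.Gamma_add_nat_eq_mul_ascPochhammer {a : ℝ} (ha : ∀ k : ℕ, a ≠ -k) (n : ℕ) :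
    Real.Gamma (a + n) = Real.Gamma a * (ascPochhammer ℝ n).eval a := by
  induction n with
  | zero => simp
  | succ n ih =>
    have hn : a + n ≠ 0 := fun h => ha n (eq_neg_of_add_eq_zero_left h)
    rw [Nat.cast_succ, ← add_assoc, Real.Gamma_add_one hn, ih, ascPochhammer_succ_right,
      Polynomial.eval_mul, Polynomial.eval_add, Polynomial.eval_X, Polynomial.eval_natCast]
    ring

theorem Ring.choose_add_nat_sub_one {K : Type*} [Field K] [CharZero K] (a : K) (n : ℕ) :
    Ring.choose (a + n - 1) n = (ascPochhammer K n).eval a / n ! := by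
  rw [Ring.choose_eq_smul, Polynomial.descPochhammer_smeval_eq_ascPochhammer,
    show a + n - 1 - n + 1 = a by ring, Polynomial.ascPochhammer_smeval_eq_eval, smul_eq_mul,
    inv_mul_eq_div]

theorem Real.hasSum_gamma_add_div_gamma_mul_pow_div_factorial {a x : ℝ} (ha : ∀ k : ℕ, a ≠ -k)
    (hx : |x| < 1) :
    HasSum (fun n : ℕ => Real.Gamma (a + n) / Real.Gamma a * x ^ n / n !) (1 / (1 - x) ^ a) := by
  have hball : x ∈ Metric.eball (0 : ℝ) 1 := by
    rwa [mem_eball_zero_iff, Real.enorm_eq_ofReal_abs, ENNReal.ofReal_lt_one]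
  have hseries := (Real.one_div_one_sub_rpow_hasFPowerSeriesOnBall_zero a).hasSum hball
  simp only [FormalMultilinearSeries.ofScalars_apply_eq, zero_add, smul_eq_mul] at hseries
  refine hseries.congr_fun fun n => ?_
  rw [Ring.choose_add_nat_sub_one, Real.Gamma_add_nat_eq_mul_ascPochhammer ha,
    mul_div_cancel_left₀ _ (Real.Gamma_ne_zero ha)]
  ring

theorem tsum_mul_neg_one_add_ite_div_sq {u : ℕ → ℝ} {c : ℝ} (hu : ∀ k, u k ≠ 0)
    (hc : HasSum (fun k => c * u k) 1) (hsum : Summable fun n => u n ^ 2 / u (n + 1)) :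
    ∑' k, c * u k * (-1 + (if k = 0 then 0 else u (k - 1)) / u k) ^ 2 =
      c * ∑' n, u n ^ 2 / u (n + 1) - 1 := by
  set g : ℕ → ℝ := fun k => if k = 0 then 0 else u (k - 1)
  have hg2 : HasSum (fun k => g k ^ 2 / u k) (∑' n, u n ^ 2 / u (n + 1)) := by
    simpa [g] using (hasSum_nat_add_iff (f := fun k => g k ^ 2 / u k) 1).mp hsum.hasSum
  have hg : HasSum (fun k => c * g k) 1 := by
    simpa [g] using (hasSum_nat_add_iff (f := fun k => c * g k) 1).mp hc
  have hterm (k : ℕ) :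
      c * u k * (-1 + g k / u k) ^ 2 = c * (g k ^ 2 / u k) - 2 * (c * g k) + c * u k := by
    field_simp [hu k]
    ring
  calc ∑' k, c * u k * (-1 + g k / u k) ^ 2
      = ∑' k, (c * (g k ^ 2 / u k) - 2 * (c * g k) + c * u k) := tsum_congr hterm
    _ = c * ∑' n, u n ^ 2 / u (n + 1) - 2 * 1 + 1 :=
      (((hg2.mul_left c).sub (hg.mul_left 2)).add hc).tsum_eq
    _ = c * ∑' n, u n ^ 2 / u (n + 1) - 1 := by ring

lemma f_eq_sum_range_mul (s : ℝ) (k : ℕ) (α β : ℝ) :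
    f s k α β = ∑ n ∈ range (k + 1),
      Real.Gamma (α + n) / Real.Gamma α * (1 + β)⁻¹ ^ n / n ! * (s ^ (k - n) / (k - n) !) := by
  unfold f
  refine sum_congr rfl fun n _ => ?_
  rw [inv_pow]
  ring

lemma hasSum_f (s : ℝ) {α β : ℝ} (hα : 0 < α) (hβ : 0 < β) :
    HasSum (fun k => f s k α β) (1 / (β / (1 + β)) ^ α * Real.exp s) := by
  have hα_ne : ∀ k : ℕ, α ≠ -k := fun k => (hα.trans_le' (neg_nonpos.mpr k.cast_nonneg)).ne'
  have hx : |(1 + β)⁻¹| < 1 := by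
    rw [abs_inv, abs_of_pos (by linarith)]
    exact inv_lt_one_of_one_lt₀ (by linarith)
  have hbinom := Real.hasSum_gamma_add_div_gamma_mul_pow_div_factorial hα_ne hx
  have hexp : HasSum (fun m : ℕ => s ^ m / m !) (Real.exp s) := by
    rw [Real.exp_eq_exp_ℝ]
    exact NormedSpace.expSeries_div_hasSum_exp s
  have hprod := hasSum_sum_range_mul_of_summable_norm hbinom.summable.norm hexp.summable.norm
  rw [hbinom.tsum_eq, hexp.tsum_eq, show 1 - (1 + β)⁻¹ = β / (1 + β) by field_simp; ring] at hprod
  exact hprod.congr_fun (f_eq_sum_range_mul s · α β)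

lemma hasSum_p (s : ℝ) {α β : ℝ} (hα : 0 < α) (hβ : 0 < β) :
    HasSum (fun k => p s k α β) 1 := by
  have hpos : 0 < (β / (1 + β)) ^ α := Real.rpow_pos_of_pos (by positivity) α
  have := (hasSum_f s hα hβ).mul_left ((β / (1 + β)) ^ α * Real.exp (-s))
  have hone : (β / (1 + β)) ^ α * Real.exp (-s) * (1 / (β / (1 + β)) ^ α * Real.exp s) = 1 := by
    rw [Real.exp_neg]
    field_simp
  rwa [hone] at this

lemma f_pos {s : ℝ} (hs : 0 ≤ s) {α β : ℝ} (hα : 0 < α) (hβ : 0 < β) (k : ℕ) :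
    0 < f s k α β := by
  have hΓ (n : ℕ) : 0 < Real.Gamma (α + n) := Real.Gamma_pos_of_pos (by positivity)
  have hΓα : 0 < Real.Gamma α := Real.Gamma_pos_of_pos hα
  refine sum_pos' (fun n _ => ?_) ⟨k, self_mem_range_succ k, ?_⟩
  · have := hΓ n
    positivity
  · have := hΓ k
    rw [Nat.sub_self, pow_zero]
    positivity

theorem statement8 (s : ℝ) (hs : 0 ≤ s) (α β : ℝ) (hα : 0 < α) (hβ : 0 < β)
    (hsum : Summable fun n : ℕ => f s n α β ^ 2 / f s (n + 1) α β) :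
    ∑' k : ℕ, p s k α β * (-1 + (if k = 0 then 0 else f s (k - 1) α β) / f s k α β) ^ 2 =
      (β / (1 + β)) ^ α * Real.exp (-s) *
        (∑' n : ℕ, f s n α β ^ 2 / f s (n + 1) α β) - 1 :=
  tsum_mul_neg_one_add_ite_div_sq (fun k => (f_pos hs hα hβ k).ne') (hasSum_p s hα hβ) hsum
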